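/- For every complex sequence (s_n)_{n∈ℕ} and every a ≥ 0 there exists a measurable function f : ℝ → ℂ with supp f ⊆ [a, ∞), ∫ |xⁿ f(x)| dx < ∞, and s_n = ∫ xⁿ f(x) dx for all n ∈ ℕ. -/

import Mathlib

/-!
The function is `f = ∑ₘ cₘ Δ_{-hₘ}^m 𝟙_[a, a+1]`. Moving the differences onto the monomial,
`∫ xⁿ Δ_{-h}^m g = ∫ (Δ_h^m xⁿ) g`, shows that the `m`-th summand has vanishing moments of order
`< m` and `m`-th moment `cₘ m! hₘᵐ`, so the coefficients can be solved for one at a time. Once `cₘ`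
is fixed this way, the `n`-th absolute moment of the `m`-th summand is `O(hₘ^(n-m))`, so choosing
the step `hₘ` large makes the series of `n`-th moments converge for every `n`.
-/

open MeasureTheory Finset fwdDiff Function Set
open scoped Nat

section FwdDiff

theorem fwdDiff_iter_comp_mul_left {R G : Type*} [Ring R] [AddCommGroup G] (c h : R) (m : ℕ)
    (f : R → G) : (Δ_[h])^[m] (fun x => f (c * x)) = fun x => (Δ_[c * h])^[m] f (c * x) := by
  induction m generalizing f with
  | zero => rfl
  | succ m ih =>
    have hstep : Δ_[h] (fun x => f (c * x)) = fun x => Δ_[c * h] f (c * x) := by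
      ext x; simp [fwdDiff, mul_add]
    rw [iterate_succ_apply, hstep, ih, iterate_succ_apply]

variable {K : Type*} [Field K] {h : K}

theorem fwdDiff_iter_pow_eq_scaled (hh : h ≠ 0) (m n : ℕ) :
    (Δ_[h])^[m] (fun x : K => x ^ n) =
      fun x => h ^ n * (Δ_[1])^[m] (fun r : K => r ^ n) (h⁻¹ * x) := by
  have hpow : (fun x : K => x ^ n) = h ^ n • fun x => (h⁻¹ * x) ^ n := by
    ext x; simp [← mul_pow, hh]
  conv_lhs => rw [hpow, fwdDiff_iter_const_smul,
    fwdDiff_iter_comp_mul_left h⁻¹ h m (fun r : K => r ^ n), inv_mul_cancel₀ hh]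
  rfl

theorem fwdDiff_iter_pow_eq_zero_of_lt_of_ne_zero (hh : h ≠ 0) {m n : ℕ} (hnm : n < m) :
    (Δ_[h])^[m] (fun x : K => x ^ n) = 0 := by
  ext x
  simp [fwdDiff_iter_pow_eq_scaled hh, fwdDiff_iter_pow_eq_zero_of_lt hnm]

theorem fwdDiff_iter_pow_self_of_ne_zero (hh : h ≠ 0) (n : ℕ) :
    (Δ_[h])^[n] (fun x : K => x ^ n) = fun _ => n ! * h ^ n := by
  ext x
  simp [fwdDiff_iter_pow_eq_scaled hh, fwdDiff_iter_eq_factorial, mul_comm]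

end FwdDiff

theorem Measurable.fwdDiff_iter {G E : Type*} [AddCommGroup G] [MeasurableSpace G]
    [MeasurableAdd G] [AddCommGroup E] [MeasurableSpace E] [MeasurableSub₂ E] {g : G → E}
    (hg : Measurable g) (c : G) (m : ℕ) : Measurable ((Δ_[c])^[m] g) := by
  induction m with
  | zero => exact hg
  | succ m ih => rw [iterate_succ_apply']; exact (ih.comp (measurable_add_const c)).sub ih

section Translation

variable {G E : Type*} [AddCommGroup G] [MeasurableSpace G] [MeasurableAdd G] {μ : Measure G}
  [μ.IsAddRightInvariant] [NormedAddCommGroup E] {g : G → E}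

theorem MeasureTheory.Integrable.fwdDiff (hg : Integrable g μ) (c : G) :
    Integrable (Δ_[c] g) μ :=
  (hg.comp_add_right c).sub hg

theorem MeasureTheory.Integrable.fwdDiff_iter (hg : Integrable g μ) (c : G) (m : ℕ) :
    Integrable ((Δ_[c])^[m] g) μ := by
  induction m with
  | zero => exact hg
  | succ m ih => rw [iterate_succ_apply']; exact ih.fwdDiff c

theorem integral_norm_fwdDiff_le (hg : Integrable g μ) (c : G) :
    ∫ x, ‖Δ_[c] g x‖ ∂μ ≤ 2 * ∫ x, ‖g x‖ ∂μ :=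
  calc ∫ x, ‖g (x + c) - g x‖ ∂μ ≤ ∫ x, (‖g (x + c)‖ + ‖g x‖) ∂μ :=
        integral_mono (hg.fwdDiff c).norm ((hg.comp_add_right c).norm.add hg.norm)
          fun x => norm_sub_le _ _
    _ = 2 * ∫ x, ‖g x‖ ∂μ := by
        rw [integral_add (hg.comp_add_right c).norm hg.norm,
          integral_add_right_eq_self (fun x => ‖g x‖) c]
        ring

theorem integral_norm_fwdDiff_iter_le (hg : Integrable g μ) (c : G) (m : ℕ) :
    ∫ x, ‖(Δ_[c])^[m] g x‖ ∂μ ≤ 2 ^ m * ∫ x, ‖g x‖ ∂μ := by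
  induction m with
  | zero => simp
  | succ m ih =>
    rw [iterate_succ_apply', pow_succ', mul_assoc]
    exact (integral_norm_fwdDiff_le (hg.fwdDiff_iter c m) c).trans (by gcongr)

theorem integral_mul_fwdDiff_iter_neg {p g : G → ℝ} (h : G) (m : ℕ)
    (hpg : ∀ c, Integrable (fun x => p (x + c) * g x) μ) :
    ∫ x, p x * (Δ_[-h])^[m] g x ∂μ = ∫ x, (Δ_[h])^[m] p x * g x ∂μ := by
  have hshift (k : ℕ) : Integrable (fun x => p x * g (x + k • -h)) μ := by
    simpa [smul_neg] using (hpg (k • h)).comp_add_right (k • -h)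
  simp_rw [fwdDiff_iter_eq_sum_shift, zsmul_eq_mul, Finset.mul_sum, Finset.sum_mul,
    mul_left_comm (p _), mul_assoc]
  rw [integral_finsetSum _ fun k _ => (hshift k).const_mul _,
    integral_finsetSum _ fun k _ => (hpg (k • h)).const_mul _]
  refine Finset.sum_congr rfl fun k _ => ?_
  rw [integral_const_mul, integral_const_mul]
  congr 1
  rw [← integral_add_right_eq_self _ (k • h)]
  simp [smul_neg]

end Translation

theorem support_fwdDiff_iter_neg_subset {E : Type*} [AddCommGroup E] {g : ℝ → E} {h u v : ℝ}
    (hh : 0 ≤ h) (hg : support g ⊆ Icc u v) (m : ℕ) :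
    support ((Δ_[-h])^[m] g) ⊆ Icc u (v + m * h) := by
  induction m with
  | zero => simpa using hg
  | succ m ih =>
    intro x hx
    rw [iterate_succ_apply'] at hx
    have hnz : (Δ_[-h])^[m] g (x + -h) ≠ 0 ∨ (Δ_[-h])^[m] g x ≠ 0 := by
      by_contra! H
      exact hx (by simp [fwdDiff, H.1, H.2])
    rcases hnz with hx' | hx' <;>
    · obtain ⟨hu, hv⟩ := ih hx'
      push_cast
      constructor <;> nlinarith

theorem norm_fwdDiff_iter_le {M E : Type*} [AddCommMonoid M] [SeminormedAddCommGroup E]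
    {g : M → E} {C : ℝ} (hg : ∀ x, ‖g x‖ ≤ C) (c : M) (m : ℕ) (x : M) :
    ‖(Δ_[c])^[m] g x‖ ≤ 2 ^ m * C := by
  induction m generalizing x with
  | zero => simpa using hg x
  | succ m ih =>
    rw [iterate_succ_apply', pow_succ', mul_assoc, two_mul]
    exact (norm_sub_le _ _).trans (add_le_add (ih _) (ih _))

theorem MeasureTheory.Integrable.continuous_mul_of_support_subset {X : Type*}
    [TopologicalSpace X] [T2Space X] [MeasurableSpace X] [OpensMeasurableSpace X] {μ : Measure X}
    {p F : X → ℝ} (hp : Continuous p) (hF : Integrable F μ) {K : Set X} (hK : IsCompact K)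
    (hFK : support F ⊆ K) : Integrable (fun x => p x * F x) μ := by
  rw [← integrableOn_iff_integrable_of_support_subset ((support_mul_subset_right _ _).trans hFK)]
  exact hF.integrableOn.continuousOn_mul hp.continuousOn hK

theorem MeasureTheory.integrable_tsum_of_summable_integral_norm {α E ι : Type*}
    [MeasurableSpace α] {μ : Measure α} [NormedAddCommGroup E] [Countable ι] {F : ι → α → E}
    (hF : ∀ i, Integrable (F i) μ) (hs : Summable fun i => ∫ x, ‖F i x‖ ∂μ)
    (hm : AEStronglyMeasurable (fun x => ∑' i, F i x) μ) :
    Integrable (fun x => ∑' i, F i x) μ := by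
  refine ⟨hm, lt_of_le_of_lt (lintegral_mono fun x => enorm_tsum_le_tsum_enorm) ?_⟩
  rw [lintegral_tsum fun i => (hF i).aestronglyMeasurable.enorm]
  simp_rw [← ofReal_integral_norm_eq_lintegral_enorm (hF _)]
  rw [← ENNReal.ofReal_tsum_of_nonneg (fun i => integral_nonneg fun x => norm_nonneg _) hs]
  exact ENNReal.ofReal_lt_top

theorem Measurable.tsum_of_summable {α E : Type*} [MeasurableSpace α] [NormedAddCommGroup E]
    [MeasurableSpace E] [BorelSpace E] [SecondCountableTopology E] {F : ℕ → α → E}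
    (hF : ∀ i, Measurable (F i)) (hs : ∀ x, Summable fun i => F i x) :
    Measurable fun x => ∑' i, F i x :=
  measurable_of_tendsto_metrizable (fun _ => Finset.measurable_sum _ fun i _ => hF i)
    (tendsto_pi_nhds.2 fun x => (hs x).hasSum.tendsto_sum_nat)

noncomputable def diffBump (a h : ℝ) (m : ℕ) : ℝ → ℝ :=
  (Δ_[-h])^[m] ((Icc a (a + 1)).indicator 1)

namespace diffBump

variable {a h : ℝ} {m n : ℕ}

theorem integral_indicator_Icc : ∫ x, (Icc a (a + 1)).indicator (1 : ℝ → ℝ) x = 1 := by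
  simp [integral_indicator_one measurableSet_Icc]

theorem integrable_indicator_Icc : Integrable ((Icc a (a + 1)).indicator (1 : ℝ → ℝ)) :=
  (integrable_indicator_iff measurableSet_Icc).2 (integrableOn_const measure_Icc_lt_top.ne)

theorem measurable : Measurable (diffBump a h m) :=
  (measurable_const.indicator measurableSet_Icc).fwdDiff_iter _ _

theorem integrable : Integrable (diffBump a h m) :=
  integrable_indicator_Icc.fwdDiff_iter _ _

theorem support_subset (hh : 0 ≤ h) : support (diffBump a h m) ⊆ Icc a (a + 1 + m * h) :=
  support_fwdDiff_iter_neg_subset hh support_indicator_subset m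

theorem abs_le_two_pow (x : ℝ) : |diffBump a h m x| ≤ 2 ^ m := by
  have hg (y : ℝ) : ‖(Icc a (a + 1)).indicator (1 : ℝ → ℝ) y‖ ≤ 1 := by
    by_cases hy : y ∈ Icc a (a + 1) <;> simp [hy]
  simpa [diffBump] using norm_fwdDiff_iter_le hg (-h) m x

theorem integral_abs_le_two_pow : ∫ x, |diffBump a h m x| ≤ 2 ^ m := by
  simpa [diffBump, norm_indicator_eq_indicator_norm, integral_indicator_Icc, ← Real.norm_eq_abs]
    using integral_norm_fwdDiff_iter_le (integrable_indicator_Icc (a := a)) (-h) m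

theorem integrable_pow_mul (hh : 0 ≤ h) (n : ℕ) :
    Integrable (fun x => x ^ n * diffBump a h m x) :=
  integrable.continuous_mul_of_support_subset (continuous_pow n) isCompact_Icc (support_subset hh)

theorem integral_abs_pow_mul_le (ha : 0 ≤ a) (hh : 0 ≤ h) :
    ∫ x, |x ^ n * diffBump a h m x| ≤ 2 ^ m * (a + 1 + m * h) ^ n := by
  have hpt (x : ℝ) : |x ^ n * diffBump a h m x| ≤ (a + 1 + m * h) ^ n * |diffBump a h m x| := by
    by_cases hx : x ∈ support (diffBump a h m)
    · obtain ⟨hax, hxb⟩ := support_subset hh hx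
      rw [abs_mul, abs_pow]
      gcongr
      exact _root_.abs_le.2 ⟨by linarith, hxb⟩
    · simp [notMem_support.1 hx]
  calc ∫ x, |x ^ n * diffBump a h m x|
      ≤ ∫ x, (a + 1 + m * h) ^ n * |diffBump a h m x| :=
        integral_mono (integrable_pow_mul hh n).abs (integrable.abs.const_mul _) hpt
    _ ≤ (a + 1 + m * h) ^ n * 2 ^ m := by
        rw [integral_const_mul]
        gcongr
        exact integral_abs_le_two_pow
    _ = 2 ^ m * (a + 1 + m * h) ^ n := mul_comm _ _

theorem integral_pow_mul_eq_integral_fwdDiff (n : ℕ) :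
    ∫ x, x ^ n * diffBump a h m x
      = ∫ x, (Δ_[h])^[m] (fun y => y ^ n) x * (Icc a (a + 1)).indicator 1 x :=
  integral_mul_fwdDiff_iter_neg h m fun c =>
    integrable_indicator_Icc.continuous_mul_of_support_subset ((continuous_add_const c).pow n)
      isCompact_Icc support_indicator_subset

theorem integral_pow_mul_of_lt (hh : h ≠ 0) (hnm : n < m) :
    ∫ x, x ^ n * diffBump a h m x = 0 := by
  simp [integral_pow_mul_eq_integral_fwdDiff, fwdDiff_iter_pow_eq_zero_of_lt_of_ne_zero hh hnm]

theorem integral_pow_mul_self (hh : h ≠ 0) :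
    ∫ x, x ^ m * diffBump a h m x = m ! * h ^ m := by
  simp [integral_pow_mul_eq_integral_fwdDiff, fwdDiff_iter_pow_self_of_ne_zero hh,
    integral_const_mul]

end diffBump

noncomputable def stepWidth (a N : ℝ) (m : ℕ) : ℝ :=
  1 + N * 4 ^ m * (a + 1 + m) ^ m

theorem one_le_stepWidth {a N : ℝ} (ha : 0 ≤ a) (hN : 0 ≤ N) (m : ℕ) : 1 ≤ stepWidth a N m := by
  unfold stepWidth
  have : 0 ≤ N * 4 ^ m * (a + 1 + m) ^ m := by positivity
  linarith

theorem stepWidth_div_mul_le_half_pow {a N : ℝ} (ha : 0 ≤ a) (hN : 0 ≤ N) {m n : ℕ}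
    (hnm : n < m) :
    N / (m ! * stepWidth a N m ^ m) * (2 ^ m * (a + 1 + m * stepWidth a N m) ^ n)
      ≤ (1 / 2) ^ m := by
  set h := stepWidth a N m with hh_def
  set A : ℝ := a + 1 + m
  have h1 : 1 ≤ h := one_le_stepWidth ha hN m
  have hA : 1 ≤ A := by simp only [A]; linarith [m.cast_nonneg (α := ℝ)]
  have hpow : h ^ m = h ^ (m - 1) * h := by rw [← pow_succ]; congr 1; omega
  have hbase : (a + 1 + m * h) ^ n ≤ A ^ m * h ^ (m - 1) :=
    calc (a + 1 + m * h) ^ n ≤ (A * h) ^ n := by gcongr; simp only [A]; nlinarith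
      _ = A ^ n * h ^ n := mul_pow _ _ _
      _ ≤ A ^ m * h ^ (m - 1) := by gcongr; omega
  have hfac : (1 : ℝ) ≤ m ! := by exact_mod_cast m.factorial_pos
  calc N / (m ! * h ^ m) * (2 ^ m * (a + 1 + m * h) ^ n)
      ≤ N / h ^ m * (2 ^ m * (A ^ m * h ^ (m - 1))) := by
        gcongr ?_ * (2 ^ m * ?_)
        exact div_le_div_of_nonneg_left hN (by positivity)
          (le_mul_of_one_le_left (by positivity) hfac)
    _ = N * 4 ^ m * A ^ m / h * (1 / 2) ^ m := by
        have h4 : (4 : ℝ) ^ m = 2 ^ m * 2 ^ m := by rw [← mul_pow]; norm_num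
        rw [hpow, h4]
        field_simp
        rw [mul_assoc, ← mul_pow]
        norm_num
    _ ≤ (1 / 2) ^ m := by
        refine mul_le_of_le_one_left (by positivity) ?_
        rw [div_le_one (by linarith)]
        simp only [hh_def, stepWidth, A]; linarith

noncomputable def coeffStep (s : ℕ → ℂ) (a : ℝ) : ℕ → ℂ × ℝ
  | m =>
    let N := s m - ∑ j : Fin m,
      (coeffStep s a j).1 * ((∫ x, x ^ m * diffBump a (coeffStep s a j).2 j x : ℝ) : ℂ)
    (N / ((m ! * stepWidth a ‖N‖ m ^ m : ℝ) : ℂ), stepWidth a ‖N‖ m)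

noncomputable def momentResidual (s : ℕ → ℂ) (a : ℝ) (m : ℕ) : ℂ :=
  s m - ∑ j ∈ range m,
    (coeffStep s a j).1 * ((∫ x, x ^ m * diffBump a (coeffStep s a j).2 j x : ℝ) : ℂ)

namespace coeffStep

variable {s : ℕ → ℂ} {a : ℝ} {m n : ℕ}

theorem eq_momentResidual : coeffStep s a m =
    (momentResidual s a m / ((m ! * stepWidth a ‖momentResidual s a m‖ m ^ m : ℝ) : ℂ),
      stepWidth a ‖momentResidual s a m‖ m) := by
  rw [coeffStep, momentResidual, Fin.sum_univ_eq_sum_range (fun j =>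
    (coeffStep s a j).1 * ((∫ x, x ^ m * diffBump a (coeffStep s a j).2 j x : ℝ) : ℂ))]

theorem one_le_snd (ha : 0 ≤ a) : 1 ≤ (coeffStep s a m).2 := by
  rw [eq_momentResidual]
  exact one_le_stepWidth ha (norm_nonneg _) m

theorem snd_pos (ha : 0 ≤ a) : 0 < (coeffStep s a m).2 :=
  zero_lt_one.trans_le (one_le_snd ha)

theorem sum_fst_mul_moment (ha : 0 ≤ a) (m : ℕ) :
    ∑ j ∈ range (m + 1),
      (coeffStep s a j).1 * ((∫ x, x ^ m * diffBump a (coeffStep s a j).2 j x : ℝ) : ℂ) = s m := by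
  have hh : (coeffStep s a m).2 ≠ 0 := (snd_pos ha).ne'
  rw [sum_range_succ, diffBump.integral_pow_mul_self hh]
  have hlast :
      (coeffStep s a m).1 * ((m ! * (coeffStep s a m).2 ^ m : ℝ) : ℂ) = momentResidual s a m := by
    rw [eq_momentResidual] at hh ⊢
    exact div_mul_cancel₀ _ (by exact_mod_cast (by positivity : (m ! * _ ^ m : ℝ) ≠ 0))
  rw [hlast, momentResidual]
  ring

theorem norm_fst_mul_le (ha : 0 ≤ a) (hnm : n < m) :
    ‖(coeffStep s a m).1‖ * (2 ^ m * (a + 1 + m * (coeffStep s a m).2) ^ n) ≤ (1 / 2) ^ m := by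
  have hw := one_le_stepWidth ha (norm_nonneg (momentResidual s a m)) m
  rw [eq_momentResidual, norm_div, Complex.norm_real, Real.norm_of_nonneg (by positivity)]
  exact stepWidth_div_mul_le_half_pow ha (norm_nonneg _) hnm

theorem summable_norm_fst_mul (s : ℕ → ℂ) (ha : 0 ≤ a) (n : ℕ) :
    Summable fun m =>
      ‖(coeffStep s a m).1‖ * (2 ^ m * (a + 1 + m * (coeffStep s a m).2) ^ n) := by
  refine Summable.of_norm_bounded_eventually_nat summable_geometric_two ?_
  filter_upwards [Filter.eventually_gt_atTop n] with m hm
  have h0 : 0 ≤ a + 1 + m * (coeffStep s a m).2 := by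
    have := one_le_snd (s := s) (m := m) ha
    positivity
  rw [Real.norm_of_nonneg (by positivity)]
  exact norm_fst_mul_le ha hm

end coeffStep

noncomputable def momentSolution (s : ℕ → ℂ) (a : ℝ) (x : ℝ) : ℂ :=
  ∑' m, (coeffStep s a m).1 * diffBump a (coeffStep s a m).2 m x

namespace momentSolution

variable {s : ℕ → ℂ} {a : ℝ}

theorem measurable (ha : 0 ≤ a) : Measurable (momentSolution s a) := by
  refine Measurable.tsum_of_summable
    (fun m => measurable_const.mul (Complex.measurable_ofReal.comp diffBump.measurable))
    fun x => Summable.of_norm_bounded (by simpa using coeffStep.summable_norm_fst_mul s ha 0)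
      fun m => ?_
  rw [norm_mul, Complex.norm_real, Real.norm_eq_abs]
  gcongr
  exact diffBump.abs_le_two_pow x

theorem support_subset (ha : 0 ≤ a) : support (momentSolution s a) ⊆ Ici a := by
  intro x hx
  by_contra hxa
  have hzero (m : ℕ) : diffBump a (coeffStep s a m).2 m x = 0 := notMem_support.1 fun hm =>
    hxa (diffBump.support_subset (coeffStep.snd_pos ha).le hm).1
  exact hx (by simp [momentSolution, hzero])

theorem pow_mul_eq_tsum (n : ℕ) (x : ℝ) : (x : ℂ) ^ n * momentSolution s a x =
    ∑' m, (x : ℂ) ^ n * ((coeffStep s a m).1 * diffBump a (coeffStep s a m).2 m x) :=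
  tsum_mul_left.symm

theorem pow_mul_term_eq (c : ℂ) (h : ℝ) (n m : ℕ) (x : ℝ) :
    (x : ℂ) ^ n * (c * diffBump a h m x) = c * ((x ^ n * diffBump a h m x : ℝ) : ℂ) := by
  push_cast
  ring

theorem integrable_pow_mul_term {c : ℂ} {h : ℝ} (hh : 0 ≤ h) (n m : ℕ) :
    Integrable fun x : ℝ => (x : ℂ) ^ n * (c * diffBump a h m x) := by
  simp_rw [pow_mul_term_eq]
  exact (diffBump.integrable_pow_mul hh n).ofReal.const_mul c

theorem integral_norm_pow_mul_term (c : ℂ) (h : ℝ) (n m : ℕ) :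
    ∫ x : ℝ, ‖(x : ℂ) ^ n * (c * diffBump a h m x)‖ =
      ‖c‖ * ∫ x, |x ^ n * diffBump a h m x| := by
  rw [← integral_const_mul]
  congr 1 with x
  rw [pow_mul_term_eq, norm_mul, Complex.norm_real, Real.norm_eq_abs]

theorem integral_pow_mul_term (c : ℂ) (h : ℝ) (n m : ℕ) :
    ∫ x : ℝ, (x : ℂ) ^ n * (c * diffBump a h m x) =
      c * ((∫ x, x ^ n * diffBump a h m x : ℝ) : ℂ) := by
  simp only [pow_mul_term_eq, integral_const_mul, integral_complex_ofReal]

theorem summable_integral_norm_pow_mul_term (ha : 0 ≤ a) (n : ℕ) :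
    Summable fun m => ∫ x : ℝ,
      ‖(x : ℂ) ^ n * ((coeffStep s a m).1 * diffBump a (coeffStep s a m).2 m x)‖ := by
  refine (coeffStep.summable_norm_fst_mul s ha n).of_nonneg_of_le
    (fun m => integral_nonneg fun x => norm_nonneg _) fun m => ?_
  rw [integral_norm_pow_mul_term]
  gcongr
  exact diffBump.integral_abs_pow_mul_le ha (coeffStep.snd_pos ha).le

theorem integrable_pow_mul (ha : 0 ≤ a) (n : ℕ) :
    Integrable fun x : ℝ => (x : ℂ) ^ n * momentSolution s a x := by
  have hmeas : Measurable fun x : ℝ => (x : ℂ) ^ n * momentSolution s a x :=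
    (Complex.measurable_ofReal.pow_const n).mul (measurable ha)
  simp_rw [pow_mul_eq_tsum] at hmeas ⊢
  exact integrable_tsum_of_summable_integral_norm
    (fun m => integrable_pow_mul_term (coeffStep.snd_pos ha).le n m)
    (summable_integral_norm_pow_mul_term ha n) hmeas.aestronglyMeasurable

theorem integral_pow_mul (ha : 0 ≤ a) (n : ℕ) :
    ∫ x : ℝ, (x : ℂ) ^ n * momentSolution s a x = s n := by
  simp_rw [pow_mul_eq_tsum]
  rw [← integral_tsum_of_summable_integral_norm
    (fun m => integrable_pow_mul_term (coeffStep.snd_pos ha).le n m)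
    (summable_integral_norm_pow_mul_term ha n)]
  simp_rw [integral_pow_mul_term]
  rw [tsum_eq_sum (s := range (n + 1)) fun m hm => ?_, coeffStep.sum_fst_mul_moment ha]
  have hnm : n < m := by simpa using hm
  rw [diffBump.integral_pow_mul_of_lt ((coeffStep.snd_pos ha).ne') hnm]
  simp

end momentSolution

/-- Every complex sequence is the moment sequence of a measurable function
supported in `[a, ∞)` (for any `a ≥ 0`) with all absolute moments finite. -/
theorem stmt19 (s : ℕ → ℂ) (a : ℝ) (ha : 0 ≤ a) :
    ∃ f : ℝ → ℂ, Measurable f ∧ Function.support f ⊆ Set.Ici a ∧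
      (∀ n : ℕ, Integrable (fun x : ℝ => (x : ℂ) ^ n * f x)) ∧
      (∀ n : ℕ, s n = ∫ x : ℝ, (x : ℂ) ^ n * f x) :=
  ⟨momentSolution s a, momentSolution.measurable ha, momentSolution.support_subset ha,
    momentSolution.integrable_pow_mul ha, fun n => (momentSolution.integral_pow_mul ha n).symm⟩
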